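/- arXiv:2507.23335 — 6 statements merged into one kernel-verified Lean document; each statement's English description precedes it below -/
import Mathlib

section
/- Let Y be a finite set, α : Y → ℕ, y₀ ∈ Y, k ∈ ℕ, n = |{y ∈ Y : α(y) ≥ α(y₀)}| with n - 1 < k, and suppose |{y ∈ Y : α(y) < α(y₀)}| ≥ k - n + 1. Define C = min over subsets S ⊆ {y : α(y) < α(y₀)} with |S| = k - n + 1 of ∑_{y∈S} (α(y₀) - α(y)). Then for every δ : Y → ℕ with δ(y₀) = 0 and ∑_{y∈Y} δ(y) < C, setting γ(y) = α(y) + δ(y), we have |{y ∈ Y : γ(y) ≥ γ(y₀)}| ≤ k. -/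
/-!
Every label that reaches `γ y₀ = α y₀` either already had `α y ≥ α y₀` (there are `n` of them)
or overtook `y₀`, which costs it at least `α y₀ - α y` extra votes. If more than `k` labels
reach `γ y₀`, at least `k - n + 1` of them overtook `y₀`, and those alone absorb a budget of at
least the smallest tie cost `C`.
-/

open Finset

theorem card_filter_le_card_filter_add_card_filter_not_and {ι : Type*} (Y : Finset ι)
    (p q : ι → Prop) [DecidablePred p] [DecidablePred q] :
    (Y.filter q).card ≤ (Y.filter p).card + (Y.filter fun y => ¬p y ∧ q y).card := by
  rw [← card_filter_add_card_filter_not (s := Y.filter q) p, filter_filter, filter_filter]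
  exact add_le_add (card_le_card (monotone_filter_right Y fun _ _ h => h.2))
    (congrArg card (filter_congr fun _ _ => and_comm)).le

theorem sum_tsub_le_sum_of_le_add {ι : Type*} {S Y : Finset ι} (hSY : S ⊆ Y) {c : ℕ}
    {f g : ι → ℕ} (hS : ∀ y ∈ S, c ≤ f y + g y) :
    ∑ y ∈ S, (c - f y) ≤ ∑ y ∈ Y, g y :=
  calc ∑ y ∈ S, (c - f y) ≤ ∑ y ∈ S, g y := sum_le_sum fun y hy => by have := hS y hy; omega
    _ ≤ ∑ y ∈ Y, g y := sum_le_sum_of_subset hSY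

theorem stmt_1_general {ι : Type*} (Y : Finset ι) (α : ι → ℕ) (y₀ : ι)
    (k n : ℕ)
    (hn : n = (Y.filter (fun y => α y₀ ≤ α y)).card)
    (hk : n - 1 < k)
    (C : ℕ)
    (hC : IsLeast {c | ∃ S ⊆ Y.filter (fun y => α y < α y₀),
        S.card = k - n + 1 ∧ c = ∑ y ∈ S, (α y₀ - α y)} C) :
    ∀ δ : ι → ℕ, δ y₀ = 0 → (∑ y ∈ Y, δ y) < C →
      (Y.filter (fun y => α y₀ + δ y₀ ≤ α y + δ y)).card ≤ k := by
  intro δ hδ₀ hbudget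
  by_contra! hmany
  simp only [hδ₀, add_zero] at hmany
  have hsplit := card_filter_le_card_filter_add_card_filter_not_and Y (fun y => α y₀ ≤ α y)
    (fun y => α y₀ ≤ α y + δ y)
  rw [← hn] at hsplit
  set overtakers := Y.filter fun y => ¬α y₀ ≤ α y ∧ α y₀ ≤ α y + δ y
  obtain ⟨S, hS, hScard⟩ := exists_subset_card_eq (s := overtakers) (n := k - n + 1) (by omega)
  have hS_lt : S ⊆ Y.filter fun y => α y < α y₀ :=
    hS.trans (monotone_filter_right Y fun _ _ h => not_le.1 h.1)
  have hC_le : C ≤ ∑ y ∈ S, (α y₀ - α y) := hC.2 ⟨S, hS_lt, hScard, rfl⟩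
  have hcost : ∑ y ∈ S, (α y₀ - α y) ≤ ∑ y ∈ Y, δ y :=
    sum_tsub_le_sum_of_le_add (hS_lt.trans (filter_subset _ _))
      fun y hy => (mem_filter.1 (hS hy)).2.2
  omega

/-- if the attacker adds no votes to `y₀` and spends strictly
less than the smallest tie cost `C`, at most `k` labels reach `γ(y₀)`. -/
theorem stmt_1 {ι : Type*} [DecidableEq ι] (Y : Finset ι) (α : ι → ℕ) (y₀ : ι)
    (hy₀ : y₀ ∈ Y) (k n : ℕ)
    (hn : n = (Y.filter (fun y => α y₀ ≤ α y)).card)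
    (hk : n - 1 < k)
    (hex : k - n + 1 ≤ (Y.filter (fun y => α y < α y₀)).card)
    (C : ℕ)
    (hC : IsLeast {c | ∃ S ⊆ Y.filter (fun y => α y < α y₀),
        S.card = k - n + 1 ∧ c = ∑ y ∈ S, (α y₀ - α y)} C) :
    ∀ δ : ι → ℕ, δ y₀ = 0 → (∑ y ∈ Y, δ y) < C →
      (Y.filter (fun y => α y₀ + δ y₀ ≤ α y + δ y)).card ≤ k :=
  stmt_1_general Y α y₀ k n hn hk C hC
end

section
/- Let Y be a finite set, α : Y → ℕ, y₀ ∈ Y, k ∈ ℕ, n = |{y ∈ Y : α(y) ≥ α(y₀)}| with n - 1 < k, and suppose |{y ∈ Y : α(y) < α(y₀)}| ≥ k - n + 1. Define C as the minimum of ∑_{y∈S}(α(y₀) - α(y)) over subsets S of size k - n + 1 of labels y with α(y) < α(y₀). Then for every δ : Y → ℕ (allowing δ(y₀) > 0) with ∑_{y∈Y} δ(y) < C, setting γ = α + δ, we have |{y ∈ Y : γ(y) ≥ γ(y₀)}| ≤ k. -/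
open Finset

/-! A label `y` with `α y < α y₀` can only reach `γ y₀ = α y₀ + δ y₀ ≥ α y₀` if it receives at
least `α y₀ - α y` extra votes. If more than `k` labels reach `γ y₀`, at most `n` of them are
among the labels already at or above `α y₀`, so at least `k - n + 1` of them come from below,
and the budget spent on them is at least the tie cost `C`. -/

section

variable {ι : Type*}

theorem card_le_card_filter_add_card_filter_of_subset {s t : Finset ι}
    (hst : s ⊆ t) (q r : ι → Prop) [DecidablePred q] [DecidablePred r]
    (hqr : ∀ y ∈ s, ¬ q y → r y) :
    s.card ≤ (s.filter q).card + (t.filter r).card := by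
  rw [← card_filter_add_card_filter_not q (s := s)]
  gcongr
  exact fun y hy => mem_filter.2
    ⟨hst (mem_filter.1 hy).1, hqr y (mem_filter.1 hy).1 (mem_filter.1 hy).2⟩

theorem sum_tsub_le_sum_of_add_le_add {s : Finset ι} {f δ : ι → ℕ} {a d : ℕ}
    (h : ∀ y ∈ s, a + d ≤ f y + δ y) :
    ∑ y ∈ s, (a - f y) ≤ ∑ y ∈ s, δ y :=
  sum_le_sum fun y hy => by have := h y hy; omega

end

theorem stmt_2_general {ι : Type*} (Y : Finset ι) (α : ι → ℕ) (y₀ : ι)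
    (k n : ℕ)
    (hn : n = (Y.filter (fun y => α y₀ ≤ α y)).card)
    (hk : n - 1 < k)
    (C : ℕ)
    (hC : IsLeast {c | ∃ S ⊆ Y.filter (fun y => α y < α y₀),
        S.card = k - n + 1 ∧ c = ∑ y ∈ S, (α y₀ - α y)} C) :
    ∀ δ : ι → ℕ, (∑ y ∈ Y, δ y) < C →
      (Y.filter (fun y => α y₀ + δ y₀ ≤ α y + δ y)).card ≤ k := by
  intro δ hδ
  by_contra! hB
  set B := Y.filter (fun y => α y₀ + δ y₀ ≤ α y + δ y)
  have hB_le : B.card ≤ (B.filter (fun y => α y < α y₀)).card + n :=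
    hn ▸ card_le_card_filter_add_card_filter_of_subset (filter_subset _ Y) _ _
      fun _ _ => le_of_not_gt
  obtain ⟨S, hSB, hS_card⟩ := exists_subset_card_eq (s := B.filter (fun y => α y < α y₀))
    (n := k - n + 1) (by omega)
  have hS_low : S ⊆ Y.filter (fun y => α y < α y₀) :=
    hSB.trans (filter_subset_filter _ (filter_subset _ Y))
  have hS_cost : ∑ y ∈ S, (α y₀ - α y) ≤ ∑ y ∈ S, δ y :=
    sum_tsub_le_sum_of_add_le_add fun y hy => (mem_filter.1 (mem_filter.1 (hSB hy)).1).2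
  have hS_budget : ∑ y ∈ S, δ y ≤ ∑ y ∈ Y, δ y :=
    sum_le_sum_of_subset (hS_low.trans (filter_subset _ Y))
  have := hC.2 ⟨S, hS_low, hS_card, rfl⟩
  omega

/-- full Theorem 2 — even allowing `δ(y₀) > 0`, a total budget
strictly less than the smallest tie cost `C` leaves at most `k` labels with
adjusted votes `≥ γ(y₀)`. -/
theorem stmt_2 {ι : Type*} [DecidableEq ι] (Y : Finset ι) (α : ι → ℕ) (y₀ : ι)
    (hy₀ : y₀ ∈ Y) (k n : ℕ)
    (hn : n = (Y.filter (fun y => α y₀ ≤ α y)).card)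
    (hk : n - 1 < k)
    (hex : k - n + 1 ≤ (Y.filter (fun y => α y < α y₀)).card)
    (C : ℕ)
    (hC : IsLeast {c | ∃ S ⊆ Y.filter (fun y => α y < α y₀),
        S.card = k - n + 1 ∧ c = ∑ y ∈ S, (α y₀ - α y)} C) :
    ∀ δ : ι → ℕ, (∑ y ∈ Y, δ y) < C →
      (Y.filter (fun y => α y₀ + δ y₀ ≤ α y + δ y)).card ≤ k :=
  stmt_2_general Y α y₀ k n hn hk C hC
end

section
/- Let Y be a finite set, α : Y → ℕ, y₀ ∈ Y, k ∈ ℕ, n = |{y ∈ Y : α(y) ≥ α(y₀)}| with n - 1 < k, and suppose |{y : α(y) < α(y₀)}| ≥ k - n + 1. Define C as the smallest tie cost as above. Then there exists δ : Y → ℕ with δ(y₀) = 0 and ∑_{y∈Y} δ(y) = C such that, with γ = α + δ, |{y ∈ Y : γ(y) ≥ γ(y₀)}| ≥ k + 1. -/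
/-!
Pick a subset `S` of labels below `α y₀` realizing the minimal tie cost and raise each `y ∈ S`
by exactly `α y₀ - α y`. As `y₀ ∉ S` is not raised, every label of `S` now ties with `y₀`
and the `n` labels already at or above `α y₀` stay there: these are `(k - n + 1) + n ≥ k + 1`
labels with adjusted vote `≥ γ(y₀)`.
-/

open Finset

section TieRaise

variable {ι : Type*} (α : ι → ℕ) (y₀ : ι) (S : Finset ι)

noncomputable def tieRaise : ι → ℕ :=
  Set.indicator (S : Set ι) fun y => α y₀ - α y

variable {α y₀ S}

theorem notMem_of_subset_filter_lt {Y : Finset ι} (hS : S ⊆ Y.filter (fun y => α y < α y₀)) :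
    y₀ ∉ S :=
  fun h => lt_irrefl _ (mem_filter.mp (hS h)).2

theorem tieRaise_of_notMem {y : ι} (hy : y ∉ S) : tieRaise α y₀ S y = 0 :=
  Set.indicator_of_notMem (by simpa using hy) _

theorem le_add_tieRaise_of_mem {y : ι} (hy : y ∈ S) : α y₀ ≤ α y + tieRaise α y₀ S y := by
  rw [tieRaise, Set.indicator_of_mem (by simpa using hy)]
  omega

theorem sum_tieRaise {Y : Finset ι} (hS : S ⊆ Y) :
    ∑ y ∈ Y, tieRaise α y₀ S y = ∑ y ∈ S, (α y₀ - α y) :=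
  sum_indicator_subset _ hS

theorem card_add_card_le_card_tied {Y : Finset ι} (hS : S ⊆ Y.filter (fun y => α y < α y₀)) :
    S.card + (Y.filter (fun y => α y₀ ≤ α y)).card ≤
      (Y.filter (fun y => α y₀ + tieRaise α y₀ S y₀ ≤ α y + tieRaise α y₀ S y)).card := by
  classical
  have hdisj : Disjoint S (Y.filter (fun y => α y₀ ≤ α y)) :=
    disjoint_left.mpr fun y hy hy' => by
      have := (mem_filter.mp (hS hy)).2
      have := (mem_filter.mp hy').2
      omega
  rw [← card_union_of_disjoint hdisj, tieRaise_of_notMem (notMem_of_subset_filter_lt hS), add_zero]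
  refine card_le_card fun y hy => ?_
  rcases mem_union.mp hy with hyS | hyY
  · exact mem_filter.mpr ⟨(mem_filter.mp (hS hyS)).1, le_add_tieRaise_of_mem hyS⟩
  · obtain ⟨hyY, hle⟩ := mem_filter.mp hyY
    exact mem_filter.mpr ⟨hyY, hle.trans (Nat.le_add_right _ _)⟩

end TieRaise

theorem stmt_3_general {ι : Type*} (Y : Finset ι) (α : ι → ℕ) (y₀ : ι)
    (k n : ℕ)
    (hn : n = (Y.filter (fun y => α y₀ ≤ α y)).card)
    (C : ℕ)
    (hC : IsLeast {c | ∃ S ⊆ Y.filter (fun y => α y < α y₀),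
        S.card = k - n + 1 ∧ c = ∑ y ∈ S, (α y₀ - α y)} C) :
    ∃ δ : ι → ℕ, δ y₀ = 0 ∧ (∑ y ∈ Y, δ y) = C ∧
      k + 1 ≤ (Y.filter (fun y => α y₀ + δ y₀ ≤ α y + δ y)).card := by
  obtain ⟨⟨S, hS, hScard, rfl⟩, -⟩ := hC
  refine ⟨tieRaise α y₀ S, tieRaise_of_notMem (notMem_of_subset_filter_lt hS),
    sum_tieRaise (hS.trans (filter_subset _ _)), ?_⟩
  have := card_add_card_le_card_tied hS
  omega

/-- tightness — an attack of cost exactly `C` pushes at least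
`k+1` labels (including `y₀`) to adjusted votes `≥ γ(y₀)`. -/
theorem stmt_3 {ι : Type*} [DecidableEq ι] (Y : Finset ι) (α : ι → ℕ) (y₀ : ι)
    (hy₀ : y₀ ∈ Y) (k n : ℕ)
    (hn : n = (Y.filter (fun y => α y₀ ≤ α y)).card)
    (hk : n - 1 < k)
    (hex : k - n + 1 ≤ (Y.filter (fun y => α y < α y₀)).card)
    (C : ℕ)
    (hC : IsLeast {c | ∃ S ⊆ Y.filter (fun y => α y < α y₀),
        S.card = k - n + 1 ∧ c = ∑ y ∈ S, (α y₀ - α y)} C) :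
    ∃ δ : ι → ℕ, δ y₀ = 0 ∧ (∑ y ∈ Y, δ y) = C ∧
      k + 1 ≤ (Y.filter (fun y => α y₀ + δ y₀ ≤ α y + δ y)).card :=
  stmt_3_general Y α y₀ k n hn C hC
end

section
/- Let Y be a finite set, α : Y → ℕ, y₀ ∈ Y, k ∈ ℕ, Δ ∈ ℕ, with n = |{y : α(y) ≥ α(y₀)}|, n - 1 < k, and |{y : α(y) < α(y₀)}| ≥ k - n + 1. Suppose for every y ≠ y₀ with α(y) + Δ ≥ α(y₀) — i.e., α(y₀) - α(y) ≤ Δ — the number of such labels is m < k. Then the smallest tie cost C_k = min over size-(k-n+1) subsets S ⊆ {y : α(y) < α(y₀)} of ∑_{y∈S}(α(y₀) - α(y)) satisfies C_k > Δ. -/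
open Finset

/-! A cheapest tie set `S` of cost at most `Δ` consists of labels whose gap to `y₀` is at most `Δ`;
together with the labels other than `y₀` that already reach `α y₀` it gives at least
`(k - n + 1) + (n - 1) ≥ k` labels within `Δ` of `y₀`, against the pairwise-bound condition. -/

section

variable {ι : Type*} {Y S : Finset ι} {α : ι → ℕ} {y₀ : ι} {Δ : ℕ}

lemma gap_le_of_sum_gap_le (hsum : ∑ y ∈ S, (α y₀ - α y) ≤ Δ) {y : ι} (hy : y ∈ S) :
    α y₀ ≤ α y + Δ := by
  have := single_le_sum (f := fun y => α y₀ - α y) (fun _ _ => Nat.zero_le _) hy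
  omega

lemma card_add_card_sub_one_le_card_within [DecidableEq ι]
    (hS : S ⊆ Y.filter (fun y => α y < α y₀)) (hsum : ∑ y ∈ S, (α y₀ - α y) ≤ Δ) :
    #S + (#(Y.filter (fun y => α y₀ ≤ α y)) - 1) ≤
      #(Y.filter (fun y => y ≠ y₀ ∧ α y₀ ≤ α y + Δ)) := by
  set N := (Y.filter (fun y => α y₀ ≤ α y)).erase y₀
  have hdisj : Disjoint S N := by
    refine disjoint_left.mpr fun y hyS hyN => ?_
    have h₁ := (mem_filter.mp (hS hyS)).2
    have h₂ := (mem_filter.mp (mem_of_mem_erase hyN)).2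
    omega
  have hsub : S ∪ N ⊆ Y.filter (fun y => y ≠ y₀ ∧ α y₀ ≤ α y + Δ) := by
    intro y hy
    rcases mem_union.mp hy with hyS | hyN
    · obtain ⟨hyY, hlt⟩ := mem_filter.mp (hS hyS)
      exact mem_filter.mpr ⟨hyY, fun h => (h ▸ hlt).false, gap_le_of_sum_gap_le hsum hyS⟩
    · obtain ⟨hyY, hle⟩ := mem_filter.mp (mem_of_mem_erase hyN)
      exact mem_filter.mpr ⟨hyY, ne_of_mem_erase hyN, by omega⟩
  calc #S + (#(Y.filter (fun y => α y₀ ≤ α y)) - 1) ≤ #S + #N :=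
        Nat.add_le_add_left (pred_card_le_card_erase) _
    _ = #(S ∪ N) := (card_union_of_disjoint hdisj).symm
    _ ≤ _ := card_le_card hsub

end

theorem stmt_8_general {ι : Type*} [DecidableEq ι] (Y : Finset ι) (α : ι → ℕ) (y₀ : ι)
    (k Δ n : ℕ)
    (hn : n = (Y.filter (fun y => α y₀ ≤ α y)).card)
    (hm : (Y.filter (fun y => y ≠ y₀ ∧ α y₀ ≤ α y + Δ)).card < k)
    (C : ℕ)
    (hC : IsLeast {c | ∃ S ⊆ Y.filter (fun y => α y < α y₀),
        S.card = k - n + 1 ∧ c = ∑ y ∈ S, (α y₀ - α y)} C) :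
    Δ < C := by
  obtain ⟨S, hS, hcard, rfl⟩ := hC.1
  by_contra! hcost
  have := card_add_card_sub_one_le_card_within hS hcost
  omega

/-- direction ① of Property 1 — the pairwise-bound condition of
PatchGuard/CBN implies CostCert's condition `C_k > Δ`. -/
theorem stmt_8 {ι : Type*} [DecidableEq ι] (Y : Finset ι) (α : ι → ℕ) (y₀ : ι)
    (hy₀ : y₀ ∈ Y) (k Δ n : ℕ)
    (hn : n = (Y.filter (fun y => α y₀ ≤ α y)).card)
    (hk : n - 1 < k)
    (hex : k - n + 1 ≤ (Y.filter (fun y => α y < α y₀)).card)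
    (hm : (Y.filter (fun y => y ≠ y₀ ∧ α y₀ ≤ α y + Δ)).card < k)
    (C : ℕ)
    (hC : IsLeast {c | ∃ S ⊆ Y.filter (fun y => α y < α y₀),
        S.card = k - n + 1 ∧ c = ∑ y ∈ S, (α y₀ - α y)} C) :
    Δ < C :=
  stmt_8_general Y α y₀ k Δ n hn hm C hC
end

section
/- Let Y be a finite set, α : Y → ℕ, y₀ ∈ Y, k, Δ ∈ ℕ, with n = |{y : α(y) ≥ α(y₀)}|, n - 1 < k, and |{y : α(y) < α(y₀)}| ≥ k - n + 1, and let C_k be the smallest tie cost. If C_k > Δ, then for every β : Y → ℕ with ∑_{y∈Y} β(y) ≤ Δ, setting v = α + β, we have |{y ∈ Y : v(y) ≥ v(y₀)}| ≤ k; in particular, in any ranking of Y by v (descending, resolving ties arbitrarily but never in favor of y₀), y₀ occupies one of the first k positions. -/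
/-!
Suppose more than `k` labels reach `y₀` under `v = α + β`. At most `n ≤ k` of them were already
level with `y₀` under `α`, so at least `k - n + 1` of them sat strictly below `y₀`. Each such
label `y` must have received at least `α y₀ - α y` dirty votes, so `β` pays at least the tie cost
of a set of `k - n + 1` labels, hence at least `C > Δ`.
-/

open Finset

lemma sum_tsub_le_sum_of_forall_add_le {ι : Type*} (S : Finset ι) (α β : ι → ℕ) (a b : ℕ)
    (h : ∀ y ∈ S, a + b ≤ α y + β y) :
    ∑ y ∈ S, (a - α y) ≤ ∑ y ∈ S, β y :=
  sum_le_sum fun y hy => by have := h y hy; omega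

lemma card_sub_le_card_filter_lt {ι : Type*} {F Y : Finset ι} (hFY : F ⊆ Y) (α : ι → ℕ) (a : ℕ) :
    F.card - (Y.filter (fun y => a ≤ α y)).card ≤ (F.filter (fun y => α y < a)).card := by
  have hsplit := card_filter_add_card_filter_not (s := F) (p := fun y => a ≤ α y)
  have hle := card_le_card (filter_subset_filter (fun y => a ≤ α y) hFY)
  simp only [not_le] at hsplit
  omega

theorem stmt_14_general {ι : Type*} (Y : Finset ι) (α : ι → ℕ)
    (y₀ : ι) (k Δ n : ℕ)
    (hn : n = (Y.filter (fun y => α y₀ ≤ α y)).card)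
    (hk : n - 1 < k)
    (C : ℕ)
    (hC : IsLeast {c | ∃ S ⊆ Y.filter (fun y => α y < α y₀),
        S.card = k - n + 1 ∧ c = ∑ y ∈ S, (α y₀ - α y)} C)
    (hCΔ : Δ < C) :
    ∀ β : ι → ℕ, (∑ y ∈ Y, β y) ≤ Δ →
      (Y.filter (fun y => α y₀ + β y₀ ≤ α y + β y)).card ≤ k := by
  intro β hβ
  by_contra! h
  set F := Y.filter (fun y => α y₀ + β y₀ ≤ α y + β y)
  have hFY : F ⊆ Y := filter_subset _ _
  have hbelow : k - n + 1 ≤ (F.filter (fun y => α y < α y₀)).card := by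
    have := card_sub_le_card_filter_lt hFY α (α y₀)
    omega
  obtain ⟨S, hSF, hScard⟩ := exists_subset_card_eq hbelow
  have hSY : S ⊆ Y := (hSF.trans (filter_subset _ _)).trans hFY
  have hS : S ⊆ Y.filter (fun y => α y < α y₀) := fun y hy =>
    mem_filter.mpr ⟨hSY hy, (mem_filter.mp (hSF hy)).2⟩
  have hSovertake : ∀ y ∈ S, α y₀ + β y₀ ≤ α y + β y := fun y hy =>
    (mem_filter.mp (mem_of_mem_filter y (hSF hy))).2
  have : C < C := calc
    C ≤ ∑ y ∈ S, (α y₀ - α y) := hC.2 ⟨S, hS, hScard, rfl⟩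
    _ ≤ ∑ y ∈ S, β y := sum_tsub_le_sum_of_forall_add_le S α β _ _ hSovertake
    _ ≤ ∑ y ∈ Y, β y := sum_le_sum_of_subset hSY
    _ ≤ Δ := hβ
    _ < C := hCΔ
  exact lt_irrefl C this

/-- abstract core of Theorem 3 — if the smallest tie cost
exceeds the budget `Δ`, then for any dirty votes `β` totalling at most `Δ`,
the true label `y₀` stays within the top `k`. -/
theorem stmt_14 {ι : Type*} [DecidableEq ι] (Y : Finset ι) (α : ι → ℕ)
    (y₀ : ι) (hy₀ : y₀ ∈ Y) (k Δ n : ℕ)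
    (hn : n = (Y.filter (fun y => α y₀ ≤ α y)).card)
    (hk : n - 1 < k)
    (hex : k - n + 1 ≤ (Y.filter (fun y => α y < α y₀)).card)
    (C : ℕ)
    (hC : IsLeast {c | ∃ S ⊆ Y.filter (fun y => α y < α y₀),
        S.card = k - n + 1 ∧ c = ∑ y ∈ S, (α y₀ - α y)} C)
    (hCΔ : Δ < C) :
    ∀ β : ι → ℕ, (∑ y ∈ Y, β y) ≤ Δ →
      (Y.filter (fun y => α y₀ + β y₀ ≤ α y + β y)).card ≤ k :=
  stmt_14_general Y α y₀ k Δ n hn hk C hC hCΔ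
end

section
/- Let Y be a finite set, α : Y → ℕ, y₀ ∈ Y, k ∈ ℕ, n = |{y : α(y) ≥ α(y₀)}| with n - 1 < k, and |{y : α(y) < α(y₀)}| ≥ k - n + 1. Let C_k be the smallest tie cost and Δ ∈ ℕ. Then C_k > Δ if and only if for every δ : Y → ℕ with ∑ δ ≤ Δ, setting γ = α + δ, we have |{y ∈ Y : γ(y) ≥ γ(y₀)}| ≤ k. -/
/-!
Raising a label `y` with `α y < α y₀` to the level of `y₀` costs at least `α y₀ - α y` extra
votes, and the labels with `α y₀ ≤ α y` are at most `n` in number. So an allocation producing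
`k + 1` labels at or above `y₀` must lift `k - n + 1` lower labels, costing at least `C`.
Conversely, giving every label of an optimal set `S` exactly `α y₀ - α y` votes spends `C`
and ties all of `S` with `y₀`, producing `n + (k - n + 1)` such labels.
-/

open Finset

namespace TieCost

variable {ι : Type*} (Y : Finset ι) (α : ι → ℕ) (y₀ : ι)

theorem exists_subset_sum_sub_le_of_add_le_card (δ : ι → ℕ) (m : ℕ)
    (hm : #(Y.filter (fun y => α y₀ ≤ α y)) + m ≤
      #(Y.filter (fun y => α y₀ + δ y₀ ≤ α y + δ y))) :
    ∃ S ⊆ Y.filter (fun y => α y < α y₀),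
      #S = m ∧ ∑ y ∈ S, (α y₀ - α y) ≤ ∑ y ∈ Y, δ y := by
  set T := Y.filter (fun y => α y₀ + δ y₀ ≤ α y + δ y)
  have hhigh : #(T.filter (fun y => ¬ α y < α y₀)) ≤ #(Y.filter (fun y => α y₀ ≤ α y)) :=
    card_le_card fun y hy => by
      simp only [T, mem_filter] at hy ⊢
      exact ⟨hy.1.1, by omega⟩
  have hlow : m ≤ #(T.filter (fun y => α y < α y₀)) := by
    have := card_filter_add_card_filter_not (s := T) (fun y => α y < α y₀)
    omega
  obtain ⟨S, hST, rfl⟩ := exists_subset_card_eq hlow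
  have hSY : S ⊆ Y.filter (fun y => α y < α y₀) := fun y hy => by
    have := hST hy
    simp only [T, mem_filter] at this ⊢
    exact ⟨this.1.1, this.2⟩
  refine ⟨S, hSY, rfl, ?_⟩
  calc ∑ y ∈ S, (α y₀ - α y)
      ≤ ∑ y ∈ S, δ y := sum_le_sum fun y hy => by
        have := hST hy
        simp only [T, mem_filter] at this
        omega
    _ ≤ ∑ y ∈ Y, δ y := sum_le_sum_of_subset (hSY.trans (filter_subset _ _))

def tieAttack [DecidableEq ι] (S : Finset ι) (y : ι) : ℕ :=
  if y ∈ S then α y₀ - α y else 0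

theorem sum_tieAttack [DecidableEq ι] {S : Finset ι} (hS : S ⊆ Y) :
    ∑ y ∈ Y, tieAttack α y₀ S y = ∑ y ∈ S, (α y₀ - α y) := by
  simp only [tieAttack]
  rw [sum_ite_mem, inter_eq_right.2 hS]

theorem card_add_card_le_card_filter_tieAttack [DecidableEq ι] {S : Finset ι}
    (hS : S ⊆ Y.filter (fun y => α y < α y₀)) :
    #(Y.filter (fun y => α y₀ ≤ α y)) + #S ≤
      #(Y.filter (fun y => α y₀ + tieAttack α y₀ S y₀ ≤ α y + tieAttack α y₀ S y)) := by
  have hlow : ∀ y ∈ S, y ∈ Y ∧ α y < α y₀ := fun y hy => mem_filter.1 (hS hy)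
  have hzero : tieAttack α y₀ S y₀ = 0 :=
    if_neg fun h => lt_irrefl _ (hlow y₀ h).2
  have hdisj : Disjoint (Y.filter (fun y => α y₀ ≤ α y)) S :=
    disjoint_left.2 fun y hy hyS => by
      have := (hlow y hyS).2
      simp only [mem_filter] at hy
      omega
  rw [← card_union_of_disjoint hdisj]
  refine card_le_card fun y hy => ?_
  simp only [mem_union, mem_filter, hzero, add_zero] at hy ⊢
  rcases hy with ⟨hyY, hle⟩ | hyS
  · exact ⟨hyY, hle.trans (Nat.le_add_right _ _)⟩
  · obtain ⟨hyY, hlt⟩ := hlow y hyS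
    simp only [tieAttack, if_pos hyS]
    exact ⟨hyY, by omega⟩

end TieCost

open TieCost in
theorem stmt_16_general {ι : Type*} [DecidableEq ι] (Y : Finset ι) (α : ι → ℕ)
    (y₀ : ι) (k Δ n : ℕ)
    (hn : n = (Y.filter (fun y => α y₀ ≤ α y)).card)
    (hk : n - 1 < k)
    (C : ℕ)
    (hC : IsLeast {c | ∃ S ⊆ Y.filter (fun y => α y < α y₀),
        S.card = k - n + 1 ∧ c = ∑ y ∈ S, (α y₀ - α y)} C) :
    Δ < C ↔ ∀ δ : ι → ℕ, (∑ y ∈ Y, δ y) ≤ Δ →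
      (Y.filter (fun y => α y₀ + δ y₀ ≤ α y + δ y)).card ≤ k := by
  constructor
  · intro hΔC δ hδ
    by_contra! hmany
    obtain ⟨S, hS, hcard, hsum⟩ :=
      exists_subset_sum_sub_le_of_add_le_card Y α y₀ δ (k - n + 1) (by omega)
    have := hC.2 ⟨S, hS, hcard, rfl⟩
    omega
  · intro hfew
    by_contra! hCΔ
    obtain ⟨S, hS, hcard, rfl⟩ := hC.1
    have hbudget := hfew (tieAttack α y₀ S)
      (by rwa [sum_tieAttack Y α y₀ (hS.trans (filter_subset _ _))])
    have := card_add_card_le_card_filter_tieAttack Y α y₀ hS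
    omega

/-- exact characterization — `C > Δ` iff no budget-`Δ`
allocation of additional votes can produce more than `k` labels with
adjusted votes at least `γ(y₀)`. -/
theorem stmt_16 {ι : Type*} [DecidableEq ι] (Y : Finset ι) (α : ι → ℕ)
    (y₀ : ι) (hy₀ : y₀ ∈ Y) (k Δ n : ℕ)
    (hn : n = (Y.filter (fun y => α y₀ ≤ α y)).card)
    (hk : n - 1 < k)
    (hex : k - n + 1 ≤ (Y.filter (fun y => α y < α y₀)).card)
    (C : ℕ)
    (hC : IsLeast {c | ∃ S ⊆ Y.filter (fun y => α y < α y₀),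
        S.card = k - n + 1 ∧ c = ∑ y ∈ S, (α y₀ - α y)} C) :
    Δ < C ↔ ∀ δ : ι → ℕ, (∑ y ∈ Y, δ y) ≤ Δ →
      (Y.filter (fun y => α y₀ + δ y₀ ≤ α y + δ y)).card ≤ k :=
  stmt_16_general Y α y₀ k Δ n hn hk C hC
end
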